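/- For every τ ∈ ℝ one has P(τ) = sech(πτ) − i·tanh(πτ); in particular |P(τ)| = 1 for all τ ∈ ℝ. -/

import Mathlib

/-!
By the reflection formula `Γ(z)Γ(1-z) = π / sin(πz)`, `P(τ) = sin(πw) / sin(πz)` with
`z = (3 - 2iτ)/4` and `w = (3 + 2iτ)/4`. Writing `y = πτ/2`, the two sines are
`sin(π/4) (cosh y ± i sinh y)`, and the quotient of these conjugates is
`(cosh y - i sinh y)² / cosh 2y = (1 - i sinh 2y) / cosh 2y`.
The modulus is `1` because `sech² + tanh² = 1`.
-/

/-- P(τ) := Γ((3−2iτ)/4)Γ((1+2iτ)/4) / (Γ((3+2iτ)/4)Γ((1−2iτ)/4)). -/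
noncomputable def Pfun (τ : ℝ) : ℂ :=
  Complex.Gamma ((3 - 2 * Complex.I * τ) / 4) * Complex.Gamma ((1 + 2 * Complex.I * τ) / 4) /
    (Complex.Gamma ((3 + 2 * Complex.I * τ) / 4) * Complex.Gamma ((1 - 2 * Complex.I * τ) / 4))

namespace Complex

open Real in
theorem Gamma_mul_Gamma_one_sub_div (z w : ℂ) :
    Gamma z * Gamma (1 - z) / (Gamma w * Gamma (1 - w)) = sin (π * w) / sin (π * z) := by
  rw [Gamma_mul_Gamma_one_sub, Gamma_mul_Gamma_one_sub]
  exact div_div_div_cancel_left' _ _ (ofReal_ne_zero.mpr pi_ne_zero)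

open Real in
theorem sin_pi_div_four_add_mul_I (y : ℂ) :
    sin (π / 4 + y * I) = sin (π / 4) * (cosh y + sinh y * I) := by
  have hcos : cos (π / 4 : ℂ) = sin (π / 4) := by
    exact_mod_cast cos_pi_div_four.trans sin_pi_div_four.symm
  rw [sin_add_mul_I, hcos]
  ring

theorem cosh_sub_sinh_mul_I_div_cosh_add_sinh_mul_I {y : ℂ} (h : cosh (2 * y) ≠ 0) :
    (cosh y - sinh y * I) / (cosh y + sinh y * I) = 1 / cosh (2 * y) - I * tanh (2 * y) := by
  have hprod : (cosh y + sinh y * I) * (cosh y - sinh y * I) = cosh (2 * y) := by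
    rw [cosh_two_mul]
    linear_combination (-sinh y ^ 2) * I_sq
  have hne : cosh y + sinh y * I ≠ 0 := left_ne_zero_of_mul (hprod ▸ h)
  rw [tanh_eq_sinh_div_cosh, ← mul_div_assoc, ← sub_div, div_eq_div_iff hne h, cosh_two_mul,
    sinh_two_mul]
  linear_combination (cosh y + sinh y * I) * cosh_sq_sub_sinh_sq y + 2 * sinh y ^ 2 * cosh y * I_sq

theorem norm_inv_cosh_sub_I_mul_tanh (x : ℝ) :
    ‖((1 / Real.cosh x : ℝ) : ℂ) - I * (Real.tanh x : ℂ)‖ = 1 := by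
  have hcosh : Real.cosh x ≠ 0 := (Real.cosh_pos x).ne'
  rw [show ((1 / Real.cosh x : ℝ) : ℂ) - I * (Real.tanh x : ℂ)
      = ((1 / Real.cosh x : ℝ) : ℂ) + ((-Real.tanh x : ℝ) : ℂ) * I by push_cast; ring,
    norm_add_mul_I, Real.sqrt_eq_one, Real.tanh_eq_sinh_div_cosh]
  field_simp
  linear_combination (-1 : ℝ) * Real.cosh_sq_sub_sinh_sq x

end Complex

open Complex

/-- For every τ ∈ ℝ one has P(τ) = sech(πτ) − i tanh(πτ); in particular |P(τ)| = 1. -/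
theorem Pfun_eq_sech_sub_I_tanh (τ : ℝ) :
    Pfun τ = ((1 / Real.cosh (Real.pi * τ) : ℝ) : ℂ)
      - Complex.I * ((Real.tanh (Real.pi * τ) : ℝ) : ℂ) ∧
    ‖Pfun τ‖ = 1 := by
  set y : ℂ := Real.pi * τ / 2
  have hsin : sin (Real.pi / 4 : ℂ) ≠ 0 := by
    exact_mod_cast (Real.sin_pos_of_pos_of_lt_pi (by positivity) (by linarith [Real.pi_pos])).ne'
  have h2y : 2 * y = (Real.pi * τ : ℝ) := by push_cast; ring
  have hcosh : cosh (2 * y) ≠ 0 := by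
    rw [h2y, ← ofReal_cosh]
    exact ofReal_ne_zero.mpr (Real.cosh_pos _).ne'
  have hP : Pfun τ = ((1 / Real.cosh (Real.pi * τ) : ℝ) : ℂ)
      - I * ((Real.tanh (Real.pi * τ) : ℝ) : ℂ) := by
    have hnum : Real.pi * ((3 + 2 * I * τ) / 4) = Real.pi - (Real.pi / 4 + -y * I) := by ring
    have hden : Real.pi * ((3 - 2 * I * τ) / 4) = Real.pi - (Real.pi / 4 + y * I) := by ring
    rw [Pfun, show (1 + 2 * I * τ) / 4 = 1 - (3 - 2 * I * τ) / 4 by ring,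
      show (1 - 2 * I * τ) / 4 = 1 - (3 + 2 * I * τ) / 4 by ring, Gamma_mul_Gamma_one_sub_div,
      hnum, hden, sin_pi_sub, sin_pi_sub, sin_pi_div_four_add_mul_I, sin_pi_div_four_add_mul_I,
      mul_div_mul_left _ _ hsin, cosh_neg, sinh_neg, neg_mul, ← sub_eq_add_neg]
    rw [cosh_sub_sinh_mul_I_div_cosh_add_sinh_mul_I hcosh, h2y]
    push_cast
    rfl
  exact ⟨hP, hP ▸ norm_inv_cosh_sub_I_mul_tanh _⟩
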